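/- There exists a constant C > 0 such that for all integers R ≥ 1 and t ≥ 1, the number of effective-walk paths confined to the slab {0,…,R} with total cost t that end at level R is at most C t times the number of such paths ending at level 0: Σ_{n=1}^t |B^R_{n,t}| ≤ C t Σ_{n=1}^t |A^R_{n,t}|. -/
import Mathlib

/-- The set `D^{R,x}_{n,t}` of effective-walk paths `(v_0,…,v_n)` confined to the slab
`{0,…,R}`, starting at `0`, ending at `x`, with total cost `n + Σ|v_i − v_{i−1}| = t`. -/
def slabSet (R x n t : ℕ) : Set (Fin (n + 1) → ℤ) :=
  {v | v 0 = 0 ∧ (∀ i : Fin (n + 1), 0 ≤ v i ∧ v i ≤ (R : ℤ)) ∧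
    v (Fin.last n) = (x : ℤ) ∧
    (n : ℤ) + ∑ i : Fin n, |v i.succ - v i.castSucc| = (t : ℤ)}

namespace SlabAux

/-- Extension of a finite path to all of `ℕ`, constant after `n`. -/
def extFn (n : ℕ) (v : Fin (n + 1) → ℤ) : ℕ → ℤ := fun i => v ⟨min i n, by omega⟩

/-- `ℕ`-indexed version of `slabSet`. -/
def Qset (R x n t : ℕ) : Set (ℕ → ℤ) :=
  {u | u 0 = 0 ∧ (∀ i, 0 ≤ u i ∧ u i ≤ (R : ℤ)) ∧ u n = (x : ℤ) ∧
    ((n : ℤ) + ∑ i ∈ Finset.range n, |u (i + 1) - u i| = (t : ℤ)) ∧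
    ∀ i, n ≤ i → u i = (x : ℤ)}

lemma sum_extFn (n : ℕ) (v : Fin (n + 1) → ℤ) :
    ∑ i : Fin n, |v i.succ - v i.castSucc|
      = ∑ i ∈ Finset.range n, |extFn n v (i + 1) - extFn n v i| := by
  rw [← Fin.sum_univ_eq_sum_range (fun i => |extFn n v (i + 1) - extFn n v i|) n]
  refine Finset.sum_congr rfl fun i _ => ?_
  have h1 : extFn n v (i.1 + 1) = v i.succ := by
    unfold extFn; congr 1; exact Fin.ext (by simp [Nat.min_eq_left i.isLt])
  have h2 : extFn n v i.1 = v i.castSucc := by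
    unfold extFn; congr 1
    exact Fin.ext (by simp [Nat.min_eq_left (le_of_lt (Nat.lt_of_lt_of_le i.isLt (Nat.le_succ n)))])
  rw [h1, h2]

lemma sum_restrict (n : ℕ) (u : ℕ → ℤ) :
    ∑ i : Fin n, |(fun k : Fin (n+1) => u k.1) i.succ - (fun k : Fin (n+1) => u k.1) i.castSucc|
      = ∑ i ∈ Finset.range n, |u (i + 1) - u i| := by
  rw [← Fin.sum_univ_eq_sum_range (fun i => |u (i + 1) - u i|) n]
  refine Finset.sum_congr rfl fun i _ => ?_
  simp [Fin.val_succ, Fin.coe_castSucc]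

noncomputable def qEquiv (R x n t : ℕ) : ↥(slabSet R x n t) ≃ ↥(Qset R x n t) where
  toFun v := ⟨extFn n v.1, by
    obtain ⟨h0, hb, hl, hc⟩ := v.2
    refine ⟨?_, fun i => hb _, ?_, ?_, ?_⟩
    · show v.1 ⟨min 0 n, _⟩ = 0
      have : (⟨min 0 n, by omega⟩ : Fin (n+1)) = 0 := Fin.ext (by simp)
      rw [this]; exact h0
    · show v.1 ⟨min n n, _⟩ = (x : ℤ)
      have : (⟨min n n, by omega⟩ : Fin (n+1)) = Fin.last n := Fin.ext (by simp)
      rw [this]; exact hl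
    · rw [← sum_extFn]; exact hc
    · intro i hi
      show v.1 ⟨min i n, _⟩ = (x : ℤ)
      have : (⟨min i n, by omega⟩ : Fin (n+1)) = Fin.last n := Fin.ext (by simp [Nat.min_eq_right hi])
      rw [this]; exact hl⟩
  invFun u := ⟨fun i => u.1 i.1, by
    obtain ⟨h0, hb, hl, hc, _⟩ := u.2
    refine ⟨h0, fun i => hb _, hl, ?_⟩
    rw [sum_restrict]; exact hc⟩
  left_inv v := by
    apply Subtype.ext; funext i
    show v.1 ⟨min i.1 n, _⟩ = v.1 i
    exact congrArg v.1 (Fin.ext (show min i.1 n = i.1 by have := i.isLt; omega))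
  right_inv u := by
    apply Subtype.ext; funext i
    show u.1 (min i n) = u.1 i
    rcases le_or_gt i n with h | h
    · rw [Nat.min_eq_left h]
    · rw [Nat.min_eq_right (le_of_lt h)]
      rw [u.2.2.2.1, u.2.2.2.2.2 i (le_of_lt h)]

end SlabAux

namespace SlabAux
open Finset

open Classical in
noncomputable def jOf (R : ℕ) (u : ℕ → ℤ) : ℕ :=
  if h : ∃ m, (R : ℤ) < 2 * u m then Nat.find h else 0

/-- Cost saved at the junction. -/
def eOf (R j : ℕ) (u : ℕ → ℤ) : ℤ :=
  |u j - u (j - 1)| - |(R : ℤ) - u j - u (j - 1)|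

/-- The surgered path: reflect after index `j`, zero after `n`. -/
def wOf (R n j : ℕ) (u : ℕ → ℤ) : ℕ → ℤ :=
  fun i => if i < j then u i else if i ≤ n then (R : ℤ) - u i else 0

lemma jOf_spec {R t n : ℕ} {u : ℕ → ℤ} (hR : 1 ≤ R) (hu : u ∈ Qset R R n t) :
    1 ≤ jOf R u ∧ jOf R u ≤ n ∧ (R : ℤ) < 2 * u (jOf R u) ∧
      ∀ i < jOf R u, 2 * u i ≤ (R : ℤ) := by
  obtain ⟨h0, hb, hl, hc, hconst⟩ := hu
  have hR' : (1 : ℤ) ≤ R := by exact_mod_cast hR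
  have hex : ∃ m, (R : ℤ) < 2 * u m := ⟨n, by rw [hl]; omega⟩
  rw [jOf, dif_pos hex]
  have hspec := Nat.find_spec hex
  have hmin : ∀ i < Nat.find hex, 2 * u i ≤ (R : ℤ) := fun i hi => by
    have := Nat.find_min hex hi; omega
  have hle : Nat.find hex ≤ n := Nat.find_le (by rw [hl]; omega)
  have h1 : 1 ≤ Nat.find hex := by
    rcases Nat.eq_zero_or_pos (Nat.find hex) with h | h
    · exfalso; have := hspec; rw [h, h0] at this; omega
    · exact h
  exact ⟨h1, hle, hspec, hmin⟩

lemma eOf_nonneg {R j : ℕ} {u : ℕ → ℤ} (h2 : (R : ℤ) < 2 * u j)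
    (h3 : 2 * u (j - 1) ≤ (R : ℤ)) : 0 ≤ eOf R j u := by
  set a := u (j - 1); set b := u j
  have hab : a ≤ b := by omega
  rw [eOf, abs_of_nonneg (by omega : (0:ℤ) ≤ b - a)]
  rcases le_or_gt 0 ((R : ℤ) - b - a) with h | h
  · rw [abs_of_nonneg h]; omega
  · rw [abs_of_neg h]; omega

lemma wOf_mem {R t n : ℕ} {u : ℕ → ℤ} (hR : 1 ≤ R) (hn1 : 1 ≤ n)
    (hu : u ∈ Qset R R n t) :
    wOf R n (jOf R u) u ∈ Qset R 0 (n + (eOf R (jOf R u) u).toNat) t ∧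
      n + (eOf R (jOf R u) u).toNat ≤ t := by
  obtain ⟨hj1, hjn, hj2, hjmin⟩ := jOf_spec hR hu
  set j := jOf R u with hjdef
  obtain ⟨h0, hb, hl, hc, hconst⟩ := hu
  have he0 : 0 ≤ eOf R j u := eOf_nonneg hj2 (hjmin (j - 1) (by omega))
  set e := eOf R j u with hedef
  set m := n + e.toNat with hmdef
  have hnm : n ≤ m := by omega
  set w := wOf R n j u with hwdef
  -- pointwise descriptions
  have hwlt : ∀ i, i < j → w i = u i := fun i hi => by
    rw [hwdef, wOf]; simp [hi]
  have hwmid : ∀ i, j ≤ i → i ≤ n → w i = (R : ℤ) - u i := fun i hi hi' => by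
    rw [hwdef, wOf]; simp [Nat.not_lt.mpr hi, hi']
  have hwgt : ∀ i, n < i → w i = 0 := fun i hi => by
    rw [hwdef, wOf]; simp [Nat.not_lt.mpr (le_trans hjn (le_of_lt hi)), Nat.not_le.mpr hi]
  have hwn : w n = 0 := by rw [hwmid n hjn le_rfl, hl]; ring
  -- main cost computation
  have hstep : ∀ i ∈ range n,
      |w (i + 1) - w i| = |u (i + 1) - u i| - (if i = j - 1 then e else 0) := by
    intro i hi
    rw [mem_range] at hi
    rcases lt_trichotomy (i + 1) j with h | h | h
    · rw [hwlt _ h, hwlt _ (by omega), if_neg (by omega)]; ring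
    · have hij : i = j - 1 := by omega
      rw [hwlt i (by omega), hwmid (i + 1) (by omega) (by omega), if_pos hij]
      rw [hedef, eOf, ← h]
      simp only [Nat.add_sub_cancel]
      ring
    · rw [hwmid (i + 1) (by omega) (by omega), hwmid i (by omega) (by omega),
        if_neg (by omega)]
      rw [show ((R:ℤ) - u (i+1) - ((R:ℤ) - u i)) = -(u (i+1) - u i) by ring, abs_neg]
      ring
  have hsum1 : ∑ i ∈ range n, |w (i + 1) - w i|
      = (∑ i ∈ range n, |u (i + 1) - u i|) - e := by
    rw [Finset.sum_congr rfl hstep, Finset.sum_sub_distrib]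
    congr 1
    rw [Finset.sum_ite_eq' (range n) (j - 1) (fun _ => e)]
    simp [mem_range, show j - 1 < n by omega]
  have hsum2 : ∑ i ∈ Finset.Ico n m, |w (i + 1) - w i| = 0 := by
    refine Finset.sum_eq_zero fun i hi => ?_
    rw [Finset.mem_Ico] at hi
    have h1 : w (i + 1) = 0 := hwgt _ (by omega)
    have h2 : w i = 0 := by
      rcases Nat.eq_or_lt_of_le hi.1 with h | h
      · rw [← h]; exact hwn
      · exact hwgt _ h
    rw [h1, h2]; simp
  have hsumw : ∑ i ∈ range m, |w (i + 1) - w i|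
      = (∑ i ∈ range n, |u (i + 1) - u i|) - e := by
    rw [range_eq_Ico, ← Finset.sum_Ico_consecutive _ (Nat.zero_le n) hnm, hsum2,
      ← range_eq_Ico, hsum1]; ring
  have hcast : ((e.toNat : ℤ)) = e := Int.toNat_of_nonneg he0
  have hcost : (m : ℤ) + ∑ i ∈ range m, |w (i + 1) - w i| = (t : ℤ) := by
    rw [hsumw]; push_cast [hmdef]
    rw [hcast] at *
    push_cast at hc ⊢
    linarith [hc, hcast]
  refine ⟨⟨?_, ?_, ?_, hcost, ?_⟩, ?_⟩
  · rw [hwlt 0 (by omega)]; exact h0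
  · intro i
    rw [hwdef, wOf]
    split
    · exact hb i
    · split
      · have := hb i; constructor <;> omega
      · constructor <;> simp [Int.natCast_nonneg]
  · rcases Nat.eq_zero_or_pos e.toNat with h | h
    · rw [hmdef, h, Nat.add_zero, hwn]; rfl
    · rw [hwgt m (by omega)]; rfl
  · intro i hi
    rcases Nat.eq_or_lt_of_le hi with h | h
    · rcases Nat.eq_zero_or_pos e.toNat with h' | h'
      · rw [← h, hmdef, h', Nat.add_zero, hwn]; rfl
      · rw [← h, hwgt m (by omega)]; rfl
    · rw [hwgt i (by omega)]; rfl
  · -- m ≤ t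
    have hnn : 0 ≤ ∑ i ∈ range m, |w (i + 1) - w i| :=
      Finset.sum_nonneg fun i _ => abs_nonneg _
    have : (m : ℤ) ≤ t := by omega
    exact_mod_cast this

end SlabAux

namespace SlabAux
open Finset

lemma recover_e {R t n : ℕ} {u : ℕ → ℤ} (hR : 1 ≤ R) (hu : u ∈ Qset R R n t) :
    eOf R (jOf R u) u
      = |(R : ℤ) - wOf R n (jOf R u) u (jOf R u) - wOf R n (jOf R u) u (jOf R u - 1)|
        - |wOf R n (jOf R u) u (jOf R u) - wOf R n (jOf R u) u (jOf R u - 1)| := by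
  obtain ⟨hj1, hjn, _, _⟩ := jOf_spec hR hu
  set j := jOf R u
  have h1 : wOf R n j u (j - 1) = u (j - 1) := by
    rw [wOf]; simp [show j - 1 < j by omega]
  have h2 : wOf R n j u j = (R : ℤ) - u j := by
    rw [wOf]; simp [hjn]
  rw [h1, h2, eOf, show (R:ℤ) - ((R:ℤ) - u j) - u (j-1) = u j - u (j-1) by ring,
    show ((R:ℤ) - u j) - u (j-1) = (R:ℤ) - u j - u (j-1) by ring]

lemma recover_u {R t n : ℕ} {u : ℕ → ℤ} (hR : 1 ≤ R) (hu : u ∈ Qset R R n t) (i : ℕ) :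
    u i = if i < jOf R u then wOf R n (jOf R u) u i
      else if i ≤ n then (R : ℤ) - wOf R n (jOf R u) u i else (R : ℤ) := by
  set j := jOf R u
  by_cases h1 : i < j
  · rw [if_pos h1, wOf, if_pos h1]
  · rw [if_neg h1]
    by_cases h2 : i ≤ n
    · rw [if_pos h2, wOf, if_neg h1, if_pos h2]; ring
    · rw [if_neg h2]
      exact hu.2.2.2.2 i (by omega)

lemma slab_finite (R x n t : ℕ) : (slabSet R x n t).Finite := by
  refine Set.Finite.subset (Set.Finite.pi (fun i : Fin (n + 1) => Set.finite_Icc (0 : ℤ) R)) ?_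
  intro v hv
  rw [Set.mem_pi]
  intro i _
  exact Set.mem_Icc.mpr (hv.2.1 i)

lemma qset_finite (R x n t : ℕ) : Finite ↥(Qset R x n t) := by
  have := (slab_finite R x n t).to_subtype
  exact Finite.of_equiv _ (qEquiv R x n t)

lemma nat_card_sigma {ι : Type*} [Fintype ι] (f : ι → Type*) [∀ i, Finite (f i)] :
    Nat.card ((i : ι) × f i) = ∑ i, Nat.card (f i) := by
  haveI := fun i => Fintype.ofFinite (f i)
  simp only [Nat.card_eq_fintype_card]
  exact Fintype.card_sigma

lemma main_count (R t : ℕ) (hR : 1 ≤ R) :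
    ∑ n ∈ Finset.Icc 1 t, Nat.card ↥(Qset R R n t)
      ≤ t * ∑ n ∈ Finset.Icc 1 t, Nat.card ↥(Qset R 0 n t) := by
  classical
  haveI : ∀ (x n : ℕ), Finite ↥(Qset R x n t) := fun x n => qset_finite R x n t
  set G : ((n : ↥(Finset.Icc 1 t)) × ↥(Qset R R (n : ℕ) t)) →
      (((n : ↥(Finset.Icc 1 t)) × ↥(Qset R 0 (n : ℕ) t)) × ↥(Finset.Icc 1 t)) :=
    fun p =>
      have hn := Finset.mem_Icc.mp p.1.2
      have hu := p.2.2
      have hj := jOf_spec hR hu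
      have hw := wOf_mem hR hn.1 hu
      (⟨⟨(p.1 : ℕ) + (eOf R (jOf R (p.2 : ℕ → ℤ)) (p.2 : ℕ → ℤ)).toNat,
          Finset.mem_Icc.mpr ⟨le_trans hn.1 (Nat.le_add_right _ _), hw.2⟩⟩,
        ⟨wOf R (p.1 : ℕ) (jOf R (p.2 : ℕ → ℤ)) (p.2 : ℕ → ℤ), hw.1⟩⟩,
       ⟨jOf R (p.2 : ℕ → ℤ), Finset.mem_Icc.mpr ⟨hj.1, le_trans hj.2.1 hn.2⟩⟩)
    with hGdef
  have hGinj : Function.Injective G := by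
    rintro ⟨n1s, u1, hu1⟩ ⟨n2s, u2, hu2⟩ hpq
    have hj12 : jOf R u1 = jOf R u2 := congrArg (fun z => (z.2.1 : ℕ)) hpq
    have hw12 : wOf R (n1s : ℕ) (jOf R u1) u1 = wOf R (n2s : ℕ) (jOf R u2) u2 :=
      congrArg (fun z => (z.1.2.1 : ℕ → ℤ)) hpq
    have hm12 : (n1s : ℕ) + (eOf R (jOf R u1) u1).toNat
        = (n2s : ℕ) + (eOf R (jOf R u2) u2).toNat :=
      congrArg (fun z => (z.1.1.1 : ℕ)) hpq
    have he12 : eOf R (jOf R u1) u1 = eOf R (jOf R u2) u2 := by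
      rw [recover_e hR hu1, recover_e hR hu2, hw12, hj12]
    have hn12 : n1s = n2s := Subtype.ext (by have := congrArg Int.toNat he12; omega)
    subst hn12
    have hw12' : wOf R (n1s : ℕ) (jOf R u2) u1 = wOf R (n1s : ℕ) (jOf R u2) u2 := by
      rw [← hj12] at hw12 ⊢; exact hw12
    have hu12 : u1 = u2 := by
      funext i
      rw [recover_u hR hu1 i, recover_u hR hu2 i, hj12, hw12']
    subst hu12; rfl
  haveI : Finite (((n : ↥(Finset.Icc 1 t)) × ↥(Qset R 0 (n : ℕ) t)) × ↥(Finset.Icc 1 t)) := by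
    infer_instance
  have hcard := Nat.card_le_card_of_injective G hGinj
  rw [nat_card_sigma, Nat.card_prod, nat_card_sigma] at hcard
  rw [Finset.sum_coe_sort _ (fun n => Nat.card ↥(Qset R R n t)),
    Finset.sum_coe_sort _ (fun n => Nat.card ↥(Qset R 0 n t))] at hcard
  have hIcc : Nat.card ↥(Finset.Icc 1 t) = t := by
    rw [Nat.card_eq_fintype_card, Fintype.card_coe, Nat.card_Icc]; omega
  rw [hIcc] at hcard
  exact le_trans hcard (le_of_eq (mul_comm _ _))

end SlabAux

/-- **Paths ending at the top of the slab versus paths ending at the bottom:** there is a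
constant `C > 0` such that for all `R ≥ 1` and `t ≥ 1`,
`Σ_{n=1}^t |B^R_{n,t}| ≤ C t Σ_{n=1}^t |A^R_{n,t}|`, where `B^R_{n,t} = D^{R,R}_{n,t}`
and `A^R_{n,t} = D^{R,0}_{n,t}`. -/
theorem slab_top_le_slab_bottom :
    ∃ C : ℝ, 0 < C ∧ ∀ R t : ℕ, 1 ≤ R → 1 ≤ t →
      ((∑ n ∈ Finset.Icc 1 t, Nat.card ↥(slabSet R R n t) : ℕ) : ℝ) ≤
        C * t * ((∑ n ∈ Finset.Icc 1 t, Nat.card ↥(slabSet R 0 n t) : ℕ) : ℝ) := by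
  refine ⟨1, one_pos, fun R t hR ht => ?_⟩
  have h1 : ∀ x n : ℕ, Nat.card ↥(slabSet R x n t) = Nat.card ↥(SlabAux.Qset R x n t) :=
    fun x n => Nat.card_congr (SlabAux.qEquiv R x n t)
  have key := SlabAux.main_count R t hR
  have hB : ∑ n ∈ Finset.Icc 1 t, Nat.card ↥(slabSet R R n t)
      = ∑ n ∈ Finset.Icc 1 t, Nat.card ↥(SlabAux.Qset R R n t) :=
    Finset.sum_congr rfl fun n _ => h1 R n
  have hA : ∑ n ∈ Finset.Icc 1 t, Nat.card ↥(slabSet R 0 n t)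
      = ∑ n ∈ Finset.Icc 1 t, Nat.card ↥(SlabAux.Qset R 0 n t) :=
    Finset.sum_congr rfl fun n _ => h1 0 n
  rw [hB, hA] at *
  have : (∑ n ∈ Finset.Icc 1 t, Nat.card ↥(SlabAux.Qset R R n t) : ℕ)
      ≤ t * ∑ n ∈ Finset.Icc 1 t, Nat.card ↥(SlabAux.Qset R 0 n t) := key
  calc ((∑ n ∈ Finset.Icc 1 t, Nat.card ↥(SlabAux.Qset R R n t) : ℕ) : ℝ)
      ≤ ((t * ∑ n ∈ Finset.Icc 1 t, Nat.card ↥(SlabAux.Qset R 0 n t) : ℕ) : ℝ) := by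
        exact_mod_cast this
    _ = 1 * t * ((∑ n ∈ Finset.Icc 1 t, Nat.card ↥(SlabAux.Qset R 0 n t) : ℕ) : ℝ) := by
        push_cast; ring
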